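/- arXiv:1401.3916 — 6 statements merged into one kernel-verified Lean document; each statement's English description precedes it below -/
import Mathlib

section
/- Let A₁ and A₂ be positive semidefinite operators on a finite-dimensional complex Hilbert space whose minimum nonzero eigenvalues are both at least v > 0, and whose kernels N₁ = ker(A₁) and N₂ = ker(A₂) satisfy N₁ ∩ N₂ = {0}. Then A₁ + A₂ ≽ 2v·sin²(α/2)·I, where cos α = max{ |⟨x|y⟩| : x ∈ N₁, y ∈ N₂, ‖x‖ = ‖y‖ = 1 }. -/
/-!
Let `Pᵢ`, `Qᵢ` be the orthogonal projections onto `Nᵢ` and `Nᵢᗮ`. Since `Aᵢ` is symmetric and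
kills `Nᵢ`, `⟪x, Aᵢ x⟫ = ⟪Qᵢ x, Aᵢ (Qᵢ x)⟫ ≥ v ‖Qᵢ x‖²`. The angle bound
`‖⟪P₁ x, P₂ x⟫‖ ≤ c ‖P₁ x‖ ‖P₂ x‖` gives `‖P₁ x + P₂ x‖² ≤ (1 + c) s` with
`s = ‖P₁ x‖² + ‖P₂ x‖² = re ⟪P₁ x + P₂ x, x⟫ ≤ ‖P₁ x + P₂ x‖ ‖x‖`, so `s ≤ (1 + c) ‖x‖²`.
By Pythagoras `‖Q₁ x‖² + ‖Q₂ x‖² ≥ (1 - c) ‖x‖²`, and `1 - c = 2 sin² (α / 2)`.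
-/

open scoped InnerProductSpace

open RCLike

section

variable {𝕜 E : Type*} [RCLike 𝕜] [NormedAddCommGroup E] [InnerProductSpace 𝕜 E]

theorem LinearMap.IsSymmetric.inner_map_self_starProjection_orthogonal_ker {A : E →ₗ[𝕜] E}
    (hA : A.IsSymmetric) [(LinearMap.ker A).HasOrthogonalProjection] (x : E) :
    ⟪(LinearMap.ker A)ᗮ.starProjection x, A ((LinearMap.ker A)ᗮ.starProjection x)⟫_𝕜 =
      ⟪x, A x⟫_𝕜 := by
  set p := (LinearMap.ker A).starProjection x
  set q := (LinearMap.ker A)ᗮ.starProjection x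
  have hp : A p = 0 := (LinearMap.ker A).starProjection_apply_mem x
  have hx : x = p + q := (Submodule.starProjection_add_starProjection_orthogonal x).symm
  have hAx : A x = A q := by rw [hx, map_add, hp, zero_add]
  rw [hAx, hx, inner_add_left, ← hA p, hp, inner_zero_left, zero_add]

theorem LinearMap.IsSymmetric.mul_norm_sq_starProjection_le {A : E →ₗ[𝕜] E}
    (hA : A.IsSymmetric) [(LinearMap.ker A).HasOrthogonalProjection] {v : ℝ}
    (hv : ∀ y ∈ (LinearMap.ker A)ᗮ, v * ‖y‖ ^ 2 ≤ re ⟪y, A y⟫_𝕜) (x : E) :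
    v * ‖(LinearMap.ker A)ᗮ.starProjection x‖ ^ 2 ≤ re ⟪x, A x⟫_𝕜 := by
  rw [← hA.inner_map_self_starProjection_orthogonal_ker]
  exact hv _ (Submodule.starProjection_apply_mem _ x)

theorem norm_add_sq_le_of_norm_inner_le {a b : E} {c : ℝ} (hc : 0 ≤ c)
    (hab : ‖⟪a, b⟫_𝕜‖ ≤ c * ‖a‖ * ‖b‖) :
    ‖a + b‖ ^ 2 ≤ (1 + c) * (‖a‖ ^ 2 + ‖b‖ ^ 2) := by
  have := (re_le_norm ⟪a, b⟫_𝕜).trans hab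
  rw [@norm_add_sq 𝕜]
  nlinarith [mul_nonneg hc (sq_nonneg (‖a‖ - ‖b‖))]

theorem Submodule.norm_sq_starProjection_add_norm_sq_starProjection_le {K L : Submodule 𝕜 E}
    [K.HasOrthogonalProjection] [L.HasOrthogonalProjection] {c : ℝ} (hc : 0 ≤ c)
    (hKL : ∀ a ∈ K, ∀ b ∈ L, ‖⟪a, b⟫_𝕜‖ ≤ c * ‖a‖ * ‖b‖) (x : E) :
    ‖K.starProjection x‖ ^ 2 + ‖L.starProjection x‖ ^ 2 ≤ (1 + c) * ‖x‖ ^ 2 := by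
  set s := ‖K.starProjection x‖ ^ 2 + ‖L.starProjection x‖ ^ 2
  have hs : s = re ⟪K.starProjection x + L.starProjection x, x⟫_𝕜 := by
    rw [inner_add_left, map_add, K.re_inner_starProjection_eq_normSq,
      L.re_inner_starProjection_eq_normSq]
    rfl
  have hsum := norm_add_sq_le_of_norm_inner_le hc
    (hKL _ (K.starProjection_apply_mem x) _ (L.starProjection_apply_mem x))
  have hcs : s ≤ ‖K.starProjection x + L.starProjection x‖ * ‖x‖ :=
    hs ▸ (re_le_norm _).trans (norm_inner_le_norm _ _)
  have hsq : s * s ≤ (1 + c) * ‖x‖ ^ 2 * s :=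
    calc s * s ≤ ‖K.starProjection x + L.starProjection x‖ ^ 2 * ‖x‖ ^ 2 := by
          nlinarith [mul_self_le_mul_self (by positivity) hcs]
      _ ≤ (1 + c) * s * ‖x‖ ^ 2 := by gcongr
      _ = (1 + c) * ‖x‖ ^ 2 * s := by ring
  rcases (show 0 ≤ s by positivity).eq_or_lt with hs0 | hs0
  · rw [← hs0]; positivity
  · exact le_of_mul_le_mul_right hsq hs0

theorem Submodule.one_sub_mul_norm_sq_le_norm_sq_starProjection_orthogonal_add
    {K L : Submodule 𝕜 E} [K.HasOrthogonalProjection] [L.HasOrthogonalProjection]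
    {c : ℝ} (hc : 0 ≤ c) (hKL : ∀ a ∈ K, ∀ b ∈ L, ‖⟪a, b⟫_𝕜‖ ≤ c * ‖a‖ * ‖b‖) (x : E) :
    (1 - c) * ‖x‖ ^ 2 ≤ ‖Kᗮ.starProjection x‖ ^ 2 + ‖Lᗮ.starProjection x‖ ^ 2 := by
  have := Submodule.norm_sq_starProjection_add_norm_sq_starProjection_le hc hKL x
  linarith [K.norm_sq_eq_add_norm_sq_starProjection x, L.norm_sq_eq_add_norm_sq_starProjection x]

/-- Its supremum is `cos α`, where `α` is the angle between `K` and `L`. -/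
def Submodule.unitInnerNorms (K L : Submodule 𝕜 E) : Set ℝ :=
  {r | ∃ x ∈ K, ∃ y ∈ L, ‖x‖ = 1 ∧ ‖y‖ = 1 ∧ r = ‖⟪x, y⟫_𝕜‖}

theorem Submodule.unitInnerNorms_subset_Icc (K L : Submodule 𝕜 E) :
    K.unitInnerNorms L ⊆ Set.Icc 0 1 := by
  rintro r ⟨x, -, y, -, hx, hy, rfl⟩
  exact ⟨norm_nonneg _, by simpa [hx, hy] using norm_inner_le_norm (𝕜 := 𝕜) x y⟩

theorem Submodule.mem_Icc_of_isLUB_unitInnerNorms {K L : Submodule 𝕜 E} {c : ℝ}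
    (hc : IsLUB (K.unitInnerNorms L) c) : c ∈ Set.Icc 0 1 := by
  obtain ⟨r, hr⟩ := hc.nonempty
  exact ⟨(K.unitInnerNorms_subset_Icc L hr).1.trans (hc.1 hr),
    hc.2 fun _ hs => (K.unitInnerNorms_subset_Icc L hs).2⟩

theorem Submodule.norm_inner_le_of_mem_upperBounds {K L : Submodule 𝕜 E} {c : ℝ}
    (hc : c ∈ upperBounds (K.unitInnerNorms L)) {a b : E} (ha : a ∈ K) (hb : b ∈ L) :
    ‖⟪a, b⟫_𝕜‖ ≤ c * ‖a‖ * ‖b‖ := by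
  rcases eq_or_ne a 0 with rfl | ha0
  · simp
  rcases eq_or_ne b 0 with rfl | hb0
  · simp
  have h := hc ⟨(‖a‖⁻¹ : 𝕜) • a, K.smul_mem _ ha, (‖b‖⁻¹ : 𝕜) • b, L.smul_mem _ hb,
    norm_smul_inv_norm ha0, norm_smul_inv_norm hb0, rfl⟩
  simp only [inner_smul_left, inner_smul_right, norm_mul, norm_conj, norm_inv, norm_ofReal,
    abs_norm] at h
  rw [inv_mul_le_iff₀ (norm_pos_iff.2 hb0), inv_mul_le_iff₀ (norm_pos_iff.2 ha0)] at h
  exact h.trans_eq (by ring)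

end

theorem Real.sin_sq_half_arccos {c : ℝ} (h₁ : -1 ≤ c) (h₂ : c ≤ 1) :
    Real.sin (Real.arccos c / 2) ^ 2 = (1 - c) / 2 := by
  rw [Real.sin_sq_eq_half_sub, mul_div_cancel₀ _ two_ne_zero, Real.cos_arccos h₁ h₂]
  ring

theorem geometric_lemma_general (n : ℕ) (A₁ A₂ : EuclideanSpace ℂ (Fin n) →ₗ[ℂ] EuclideanSpace ℂ (Fin n))
    (v : ℝ) (hv : 0 < v)
    (hsym₁ : ∀ x y, (inner ℂ (A₁ x) y) = inner ℂ x (A₁ y))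
    (hsym₂ : ∀ x y, (inner ℂ (A₂ x) y) = inner ℂ x (A₂ y))
    (hmin₁ : ∀ x ∈ (LinearMap.ker A₁)ᗮ, v * ‖x‖ ^ 2 ≤ (inner ℂ x (A₁ x)).re)
    (hmin₂ : ∀ x ∈ (LinearMap.ker A₂)ᗮ, v * ‖x‖ ^ 2 ≤ (inner ℂ x (A₂ x)).re)
    (c : ℝ)
    (hc : IsLUB {r : ℝ | ∃ x ∈ LinearMap.ker A₁, ∃ y ∈ LinearMap.ker A₂,
        ‖x‖ = 1 ∧ ‖y‖ = 1 ∧ r = ‖(inner ℂ x y)‖} c)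
    (α : ℝ) (hα : α = Real.arccos c) :
    ∀ x, 2 * v * Real.sin (α / 2) ^ 2 * ‖x‖ ^ 2 ≤ (inner ℂ x ((A₁ + A₂) x)).re := by
  intro x
  obtain ⟨hc₀, hc₁⟩ := Submodule.mem_Icc_of_isLUB_unitInnerNorms hc
  have hkernels := Submodule.one_sub_mul_norm_sq_le_norm_sq_starProjection_orthogonal_add hc₀
    (fun _ ha _ hb => Submodule.norm_inner_le_of_mem_upperBounds hc.1 ha hb) x
  have h₁ : _ ≤ (inner ℂ x (A₁ x)).re :=
    LinearMap.IsSymmetric.mul_norm_sq_starProjection_le hsym₁ hmin₁ x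
  have h₂ : _ ≤ (inner ℂ x (A₂ x)).re :=
    LinearMap.IsSymmetric.mul_norm_sq_starProjection_le hsym₂ hmin₂ x
  rw [hα, Real.sin_sq_half_arccos (by linarith) hc₁, LinearMap.add_apply, inner_add_right,
    Complex.add_re]
  linarith [mul_le_mul_of_nonneg_left hkernels hv.le]

/-- Kitaev's Geometric Lemma. -/
theorem geometric_lemma (n : ℕ) (A₁ A₂ : EuclideanSpace ℂ (Fin n) →ₗ[ℂ] EuclideanSpace ℂ (Fin n))
    (v : ℝ) (hv : 0 < v)
    (hsym₁ : ∀ x y, (inner ℂ (A₁ x) y) = inner ℂ x (A₁ y))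
    (hsym₂ : ∀ x y, (inner ℂ (A₂ x) y) = inner ℂ x (A₂ y))
    (hpos₁ : ∀ x, 0 ≤ (inner ℂ x (A₁ x)).re)
    (hpos₂ : ∀ x, 0 ≤ (inner ℂ x (A₂ x)).re)
    (hmin₁ : ∀ x ∈ (LinearMap.ker A₁)ᗮ, v * ‖x‖ ^ 2 ≤ (inner ℂ x (A₁ x)).re)
    (hmin₂ : ∀ x ∈ (LinearMap.ker A₂)ᗮ, v * ‖x‖ ^ 2 ≤ (inner ℂ x (A₂ x)).re)
    (htriv : LinearMap.ker A₁ ⊓ LinearMap.ker A₂ = ⊥)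
    (c : ℝ)
    (hc : IsLUB {r : ℝ | ∃ x ∈ LinearMap.ker A₁, ∃ y ∈ LinearMap.ker A₂,
        ‖x‖ = 1 ∧ ‖y‖ = 1 ∧ r = ‖(inner ℂ x y)‖} c)
    (α : ℝ) (hα : α = Real.arccos c) :
    ∀ x, 2 * v * Real.sin (α / 2) ^ 2 * ‖x‖ ^ 2 ≤ (inner ℂ x ((A₁ + A₂) x)).re :=
  geometric_lemma_general n A₁ A₂ v hv hsym₁ hsym₂ hmin₁ hmin₂ c hc α hα
end

section
/- Let E be the (L+1)×(L+1) real symmetric tridiagonal matrix with diagonal entries (1/2, 1, 1, …, 1, 1/2) and off-diagonal entries −1/2. Then the eigenvalues of E are exactly λ_k = 1 − cos(πk/(L+1)) for k = 0, 1, …, L; in particular E is positive semidefinite, its kernel is one-dimensional and spanned by the uniform vector (1,1,…,1)/√(L+1), and its smallest nonzero eigenvalue is 1 − cos(π/(L+1)). -/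
/-!
`E` is half the Laplacian of the path graph on `L + 1` vertices, so it is positive semidefinite
and, the path being connected, its kernel consists of the constant vectors. The cosine modes
`j ↦ cos (π k (j + 1/2) / (L + 1))` are even about `-1/2` and about `L + 1/2`, so they satisfy
the reflecting boundary conditions under which the end rows of `E` act like interior rows of the
second-difference operator; this makes them eigenvectors with eigenvalues `1 - cos (π k / (L + 1))`.
These `L + 1` eigenvalues are distinct, hence they exhaust the spectrum.
-/

open Real SimpleGraph Finset Matrix Function

theorem Matrix.spectrum_eq_range_of_mulVec_eq_smul {K n : Type*} [Field K] [Fintype n]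
    [DecidableEq n] {A : Matrix n n K} {μ : n → K} (hμ : Injective μ) {v : n → n → K}
    (hv : ∀ k, v k ≠ 0) (hAv : ∀ k, A *ᵥ v k = μ k • v k) :
    spectrum K A = Set.range μ := by
  have hev (k : n) : Module.End.HasEigenvector (toLin' A) (μ k) (v k) :=
    ⟨Module.End.mem_eigenspace_iff.mpr (by rw [toLin'_apply]; exact hAv k), hv k⟩
  ext x
  rw [← spectrum_toLin', ← Module.End.hasEigenvalue_iff_mem_spectrum]
  refine ⟨fun hx => ?_, ?_⟩
  · -- Another eigenvalue would give `card n + 1` linearly independent eigenvectors.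
    by_contra hxμ
    obtain ⟨w, hw⟩ := hx.exists_hasEigenvector
    have hinj : Injective fun o : Option n => o.elim x μ := by
      rintro (_ | a) (_ | b) h
      exacts [rfl, (hxμ ⟨b, h.symm⟩).elim, (hxμ ⟨a, h⟩).elim, congrArg some (hμ h)]
    have hli := Module.End.eigenvectors_linearIndependent' (toLin' A) _ hinj (fun o => o.elim w v)
      (by rintro (_ | k); exacts [hw, hev k])
    simpa using hli.fintype_card_le_finrank
  · rintro ⟨k, rfl⟩
    exact Module.End.hasEigenvalue_of_hasEigenvector (hev k)

theorem SimpleGraph.Connected.ker_mulVecLin_lapMatrix {V : Type*} [Fintype V] [DecidableEq V]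
    {G : SimpleGraph V} [DecidableRel G.Adj] (hG : G.Connected) :
    LinearMap.ker (G.lapMatrix ℝ).mulVecLin = ℝ ∙ fun _ => 1 := by
  ext x
  rw [LinearMap.mem_ker, mulVecLin_apply, lapMatrix_mulVec_eq_zero_iff_forall_reachable,
    Submodule.mem_span_singleton]
  refine ⟨fun hx => ?_, ?_⟩
  · obtain ⟨v⟩ := hG.nonempty
    exact ⟨x v, funext fun i => by simpa using hx v i (hG.preconnected v i)⟩
  · rintro ⟨a, rfl⟩ _ _ _
    rfl

instance SimpleGraph.pathGraph.instDecidableRelAdj (n : ℕ) : DecidableRel (pathGraph n).Adj :=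
  fun _ _ => decidable_of_iff _ pathGraph_adj.symm

lemma pathGraph_sum_adj {M : Type*} [AddCommMonoid M] (n : ℕ) (i : Fin (n + 1)) (g : ℕ → M) :
    ∑ j, (if (pathGraph (n + 1)).Adj i j then g j else 0) =
      (if 0 < (i : ℕ) then g (i - 1) else 0) + (if (i : ℕ) < n then g (i + 1) else 0) := by
  have hsplit (j : ℕ) : (if (i : ℕ) + 1 = j ∨ j + 1 = i then g j else 0) =
      (if 0 < (i : ℕ) then (if i - 1 = j then g j else 0) else 0) +
        if i + 1 = j then g j else 0 := by
    split_ifs <;> first | omega | simp_all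
  simp only [pathGraph_adj, hsplit, sum_add_distrib]
  rw [Fin.sum_univ_eq_sum_range fun j => if 0 < (i : ℕ) then (if i - 1 = j then g j else 0) else 0,
    Fin.sum_univ_eq_sum_range fun j => if (i : ℕ) + 1 = j then g j else 0]
  simp only [sum_ite_irrel, sum_ite_eq, sum_const_zero, mem_range]
  congr 1 <;> split_ifs <;> first | rfl | omega

lemma pathGraph_degree (n : ℕ) (i : Fin (n + 1)) :
    (pathGraph (n + 1)).degree i =
      (if 0 < (i : ℕ) then 1 else 0) + (if (i : ℕ) < n then 1 else 0) := by
  rw [← Nat.cast_id ((pathGraph (n + 1)).degree i), degree_eq_sum_if_adj]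
  exact pathGraph_sum_adj n i fun _ => 1

/-- The values of `f` at the phantom vertices `-1` and `n + 1` stand in for the missing neighbours
of the end vertices. -/
lemma lapMatrix_pathGraph_mulVec_apply {n : ℕ} {f : ℝ → ℝ} (h₀ : f (-1) = f 0)
    (hₙ : f (n + 1) = f n) (i : Fin (n + 1)) :
    ((pathGraph (n + 1)).lapMatrix ℝ *ᵥ fun j => f (j : ℕ)) i =
      2 * f (i : ℕ) - f ((i : ℕ) - 1) - f ((i : ℕ) + 1) := by
  rw [lapMatrix_mulVec_apply, neighborFinset_eq_filter, sum_filter, pathGraph_degree,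
    pathGraph_sum_adj n i fun m => f m]
  have hleft : (if 0 < (i : ℕ) then f ((i - 1 : ℕ) : ℝ) else f (i : ℕ)) = f ((i : ℕ) - 1) := by
    split_ifs with h
    · rw [Nat.cast_sub h, Nat.cast_one]
    · simp [show (i : ℕ) = 0 by omega, h₀]
  have hright : (if (i : ℕ) < n then f ((i + 1 : ℕ) : ℝ) else f (i : ℕ)) = f ((i : ℕ) + 1) := by
    split_ifs with h
    · push_cast; rfl
    · simp [show (i : ℕ) = n by omega, hₙ]
  split_ifs at hleft hright ⊢ <;> push_cast <;> linarith

noncomputable def cosineMode (n k : ℕ) : Fin (n + 1) → ℝ :=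
  fun j => cos (π * k / (n + 1) * ((j : ℕ) + 1 / 2))

lemma lapMatrix_pathGraph_mulVec_cosineMode (n k : ℕ) :
    (pathGraph (n + 1)).lapMatrix ℝ *ᵥ cosineMode n k =
      (2 * (1 - cos (π * k / (n + 1)))) • cosineMode n k := by
  unfold cosineMode
  set c := π * k / (n + 1)
  have hc : c * (n + 1) = k * π := by simp only [c]; field_simp
  have h₀ : cos (c * (-1 + 1 / 2)) = cos (c * (0 + 1 / 2)) := by rw [← cos_neg]; ring_nf
  have hₙ : cos (c * (n + 1 + 1 / 2)) = cos (c * (n + 1 / 2)) := by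
    rw [show c * (n + 1 + 1 / 2) = k * π + c / 2 by linear_combination hc,
      show c * (n + 1 / 2) = k * π - c / 2 by linear_combination hc,
      cos_add, cos_sub, sin_nat_mul_pi]
    ring
  ext i
  rw [lapMatrix_pathGraph_mulVec_apply (f := fun t => cos (c * (t + 1 / 2))) h₀ hₙ,
    Pi.smul_apply, smul_eq_mul, show c * ((i : ℕ) - 1 + 1 / 2) = c * ((i : ℕ) + 1 / 2) - c by ring,
    show c * ((i : ℕ) + 1 + 1 / 2) = c * ((i : ℕ) + 1 / 2) + c by ring, cos_sub, cos_add]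
  ring

lemma pi_mul_div_mem_Ico {n k : ℕ} (hk : k < n + 1) : π * k / (n + 1) ∈ Set.Ico 0 π := by
  refine ⟨by positivity, ?_⟩
  rw [div_lt_iff₀ (by positivity)]
  have : (k : ℝ) < n + 1 := by exact_mod_cast hk
  nlinarith [pi_pos]

lemma injective_one_sub_cos_pi_mul_div (n : ℕ) :
    Injective fun k : Fin (n + 1) => 1 - cos (π * k / (n + 1)) := by
  intro a b hab
  have h := injOn_cos (Set.Ico_subset_Icc_self (pi_mul_div_mem_Ico a.isLt))
    (Set.Ico_subset_Icc_self (pi_mul_div_mem_Ico b.isLt)) (by simpa using hab)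
  field_simp at h
  exact Fin.ext (by exact_mod_cast h)

lemma cosineMode_ne_zero {n k : ℕ} (hk : k < n + 1) : cosineMode n k ≠ 0 := by
  intro h
  have h₀ := congrFun h 0
  have hc := pi_mul_div_mem_Ico hk
  refine (cos_pos_of_mem_Ioo ⟨?_, ?_⟩).ne' (by simpa [cosineMode] using h₀)
  · linarith [hc.1, pi_pos]
  · linarith [hc.2]

lemma one_sub_cos_pi_div_le {n k : ℕ} (hk₀ : k ≠ 0) (hk : k < n + 1) :
    1 - cos (π / (n + 1)) ≤ 1 - cos (π * k / (n + 1)) := by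
  have : π / (n + 1) ≤ π * k / (n + 1) := by
    gcongr
    exact le_mul_of_one_le_right pi_pos.le (by exact_mod_cast Nat.one_le_iff_ne_zero.mpr hk₀)
  linarith [cos_le_cos_of_nonneg_of_le_pi (by positivity) (pi_mul_div_mem_Ico hk).2.le this]

noncomputable def clockMatrix (L : ℕ) : Matrix (Fin (L + 1)) (Fin (L + 1)) ℝ :=
  Matrix.of fun (i j : Fin (L + 1)) =>
    if (i : ℕ) = (j : ℕ) then (if (i : ℕ) = 0 ∨ (i : ℕ) = L then (1 / 2 : ℝ) else 1)
    else if (i : ℕ) + 1 = (j : ℕ) ∨ (j : ℕ) + 1 = (i : ℕ) then (-(1 / 2) : ℝ) else 0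

lemma clockMatrix_eq_smul_lapMatrix {L : ℕ} (hL : 1 ≤ L) :
    clockMatrix L = (1 / 2 : ℝ) • (pathGraph (L + 1)).lapMatrix ℝ := by
  ext i j
  simp only [clockMatrix, lapMatrix, degMatrix, of_apply, Matrix.smul_apply, Matrix.sub_apply,
    diagonal_apply, adjMatrix_apply, pathGraph_adj, pathGraph_degree, Fin.ext_iff, smul_eq_mul]
  split_ifs <;> first | omega | norm_num

/-- Spectrum of the clock-register propagation matrix in Kitaev's proof. -/
theorem clock_matrix_spectrum (L : ℕ) (hL : 1 ≤ L)
    (E : Matrix (Fin (L + 1)) (Fin (L + 1)) ℝ)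
    (hE : E = Matrix.of fun (i j : Fin (L + 1)) =>
      if (i : ℕ) = (j : ℕ) then (if (i : ℕ) = 0 ∨ (i : ℕ) = L then (1 / 2 : ℝ) else 1)
      else if (i : ℕ) + 1 = (j : ℕ) ∨ (j : ℕ) + 1 = (i : ℕ) then (-(1 / 2) : ℝ) else 0) :
    spectrum ℝ E = Set.range (fun k : Fin (L + 1) => 1 - Real.cos (π * k / (L + 1))) ∧
    E.PosSemidef ∧
    LinearMap.ker E.mulVecLin =
      Submodule.span ℝ {(fun _ => 1 / Real.sqrt (L + 1) : Fin (L + 1) → ℝ)} ∧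
    (∀ x ∈ spectrum ℝ E, x ≠ 0 → 1 - Real.cos (π / (L + 1)) ≤ x) ∧
    (1 - Real.cos (π / (L + 1))) ∈ spectrum ℝ E := by
  obtain rfl : E = (1 / 2 : ℝ) • (pathGraph (L + 1)).lapMatrix ℝ :=
    hE.trans (clockMatrix_eq_smul_lapMatrix hL)
  have hspec : spectrum ℝ ((1 / 2 : ℝ) • (pathGraph (L + 1)).lapMatrix ℝ) =
      Set.range fun k : Fin (L + 1) => 1 - cos (π * k / (L + 1)) := by
    refine spectrum_eq_range_of_mulVec_eq_smul (injective_one_sub_cos_pi_mul_div L)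
      (fun k => cosineMode_ne_zero k.isLt) fun k => ?_
    rw [smul_mulVec, lapMatrix_pathGraph_mulVec_cosineMode, smul_smul]
    ring_nf
  refine ⟨hspec, (posSemidef_lapMatrix ℝ _).smul (by norm_num), ?_, ?_,
    hspec ▸ ⟨⟨1, by omega⟩, by simp⟩⟩
  · have hconst : (fun _ => 1 / √(L + 1) : Fin (L + 1) → ℝ) = (1 / √(L + 1) : ℝ) • fun _ => 1 := by
      ext; simp
    rw [← toLin'_apply', map_smul, LinearMap.ker_smul _ _ (by norm_num), toLin'_apply',
      (pathGraph_connected L).ker_mulVecLin_lapMatrix, hconst,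
      Submodule.span_singleton_smul_eq (IsUnit.mk0 _ (by positivity))]
  · rw [hspec]
    rintro _ ⟨k, rfl⟩ hk
    exact one_sub_cos_pi_div_le (fun h => hk (by simp [h])) k.isLt
end

section
/- Let a, b, c be qubits and suppose two-qubit constraint vectors satisfy |φ_ab⟩ = (A⊗I)|ψ⁻⟩_ab and |φ_bc⟩ = (I⊗C)|ψ⁻⟩_bc for linear operators A, C on ℂ². If a state |ψ⟩ on n qubits satisfies ⟨ψ|φ_ab⟩ = 0 and ⟨ψ|φ_bc⟩ = 0, then |ψ⟩ also satisfies ⟨ψ|φ_ac⟩ = 0 where |φ_ac⟩ = (A⊗C)|ψ⁻⟩_ac. -/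
open Matrix Kronecker

/-- Constraint-generation lemma (Lemma 1 of Bravyi's Quantum 2-SAT algorithm):
if an `n`-qubit state is orthogonal (as a partial inner product, with the rest
of the system `R` arbitrary) to `(A⊗I)ψ⁻` on qubits `a,b` and to `(I⊗C)ψ⁻` on
qubits `b,c`, then it is orthogonal to `(A⊗C)ψ⁻` on qubits `a,c`. -/
theorem quantum_2sat_constraint_generation
    (R : Type*) [Fintype R]
    (ψm : Fin 2 × Fin 2 → ℂ)
    (hψm : ψm = fun p => if p = (0, 1) then 1 / (Real.sqrt 2 : ℂ)
                         else if p = (1, 0) then -(1 / (Real.sqrt 2 : ℂ)) else 0)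
    (A C : Matrix (Fin 2) (Fin 2) ℂ)
    (φab φbc φac : Fin 2 × Fin 2 → ℂ)
    (hab : φab = (A ⊗ₖ (1 : Matrix (Fin 2) (Fin 2) ℂ)).mulVec ψm)
    (hbc : φbc = ((1 : Matrix (Fin 2) (Fin 2) ℂ) ⊗ₖ C).mulVec ψm)
    (hac : φac = (A ⊗ₖ C).mulVec ψm)
    (ψ : Fin 2 → Fin 2 → Fin 2 → R → ℂ)
    (h1 : ∀ (c : Fin 2) (r : R), ∑ a : Fin 2, ∑ b : Fin 2, star (φab (a, b)) * ψ a b c r = 0)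
    (h2 : ∀ (a : Fin 2) (r : R), ∑ b : Fin 2, ∑ c : Fin 2, star (φbc (b, c)) * ψ a b c r = 0) :
    ∀ (b : Fin 2) (r : R), ∑ a : Fin 2, ∑ c : Fin 2, star (φac (a, c)) * ψ a b c r = 0 := by
  subst hψm hab hbc hac
  intro b r
  have h10 := h1 0 r
  have h11 := h1 1 r
  have h20 := h2 0 r
  have h21 := h2 1 r
  simp only [mulVec, dotProduct, kroneckerMap_apply, Fin.sum_univ_two,
    Fintype.sum_prod_type, Matrix.one_apply, Prod.mk.injEq] at h10 h11 h20 h21 ⊢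
  fin_cases b <;> simp_all
  · linear_combination (starRingEnd ℂ) (A 0 0) * h20 + (starRingEnd ℂ) (A 1 0) * h21 +
      (starRingEnd ℂ) (C 0 0) * h10 + (starRingEnd ℂ) (C 1 0) * h11
  · linear_combination (starRingEnd ℂ) (C 0 1) * h10 + (starRingEnd ℂ) (C 1 1) * h11 +
      (starRingEnd ℂ) (A 0 1) * h20 + (starRingEnd ℂ) (A 1 1) * h21
end

section
/- Let H be a Hamiltonian with unique ground state Γ and let K be a (D,Δ)-AGSP for a fixed bipartite cut, meaning: KΓ = Γ; K maps the orthogonal complement of Γ into itself with ‖Kv‖² ≤ Δ‖v‖² for all v ⊥ Γ; and K has Schmidt rank at most D across the cut. If D·Δ ≤ 1/2, then there exists a product state φ = φ_L ⊗ φ_R across the cut with |⟨Γ|φ⟩| ≥ 1/√(2D). -/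
/-!
Let `φ = a ⊗ b` be a product state maximising `μ = |⟨Γ, φ⟩|`. Writing `φ = cΓ + v` with `v ⊥ Γ`,
the AGSP gives `⟨Γ, Kφ⟩ = c` and `‖Kφ‖² ≤ μ² + Δ (1 - μ²)`. On the other hand `Kφ` has Schmidt
rank at most `D`: writing it as `∑ⱼ eⱼ ⊗ wⱼ` with `(eⱼ)` orthonormal, maximality of `μ` bounds each
`|⟨Γ, eⱼ ⊗ wⱼ⟩|` by `μ ‖wⱼ‖`, and Cauchy–Schwarz gives `μ² = |⟨Γ, Kφ⟩|² ≤ D μ² ‖Kφ‖²`. Hence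
`1 ≤ D (μ² + Δ (1 - μ²)) ≤ D μ² + (1 - μ²) / 2`, i.e. `μ² ≥ 1 / (2D)`.
-/

open Matrix WithLp
open scoped InnerProductSpace

noncomputable section

namespace AreaLaw

variable {𝕜 : Type*} [RCLike 𝕜]

section Agsp

variable {E : Type*} [NormedAddCommGroup E] [InnerProductSpace 𝕜 E] {T : E →ₗ[𝕜] E} {Γ : E}

lemma inner_sub_smul_of_norm_eq_one (hΓ : ‖Γ‖ = 1) (x : E) (c : 𝕜) :
    ⟪Γ, x - c • Γ⟫_𝕜 = ⟪Γ, x⟫_𝕜 - c := by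
  rw [inner_sub_right, inner_smul_right, inner_self_eq_norm_sq_to_K, hΓ]
  simp

theorem inner_apply_eq_of_agsp (hΓ : ‖Γ‖ = 1) (hfix : T Γ = Γ)
    (horth : ∀ v, ⟪Γ, v⟫_𝕜 = 0 → ⟪Γ, T v⟫_𝕜 = 0) (φ : E) : ⟪Γ, T φ⟫_𝕜 = ⟪Γ, φ⟫_𝕜 := by
  have h := horth _ ((inner_sub_smul_of_norm_eq_one hΓ φ _).trans (sub_self _))
  rwa [map_sub, map_smul, hfix, inner_sub_smul_of_norm_eq_one hΓ, sub_eq_zero] at h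

theorem norm_sq_apply_le_of_agsp {Δ : ℝ} (hΓ : ‖Γ‖ = 1) (hfix : T Γ = Γ)
    (horth : ∀ v, ⟪Γ, v⟫_𝕜 = 0 → ⟪Γ, T v⟫_𝕜 = 0)
    (hshrink : ∀ v, ⟪Γ, v⟫_𝕜 = 0 → ‖T v‖ ^ 2 ≤ Δ * ‖v‖ ^ 2) (φ : E) :
    ‖T φ‖ ^ 2 ≤ ‖⟪Γ, φ⟫_𝕜‖ ^ 2 + Δ * (‖φ‖ ^ 2 - ‖⟪Γ, φ⟫_𝕜‖ ^ 2) := by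
  set c := ⟪Γ, φ⟫_𝕜
  set v := φ - c • Γ
  have hv : ⟪Γ, v⟫_𝕜 = 0 := (inner_sub_smul_of_norm_eq_one hΓ φ c).trans (sub_self c)
  have pythagoras : ∀ y, ⟪Γ, y⟫_𝕜 = 0 → ‖c • Γ + y‖ ^ 2 = ‖c‖ ^ 2 + ‖y‖ ^ 2 := fun y hy => by
    rw [norm_add_sq (𝕜 := 𝕜), inner_smul_left, hy, norm_smul, hΓ]
    simp
  have hφ : ‖φ‖ ^ 2 = ‖c‖ ^ 2 + ‖v‖ ^ 2 := by rw [← pythagoras v hv, add_sub_cancel]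
  have hTφ : ‖T φ‖ ^ 2 = ‖c‖ ^ 2 + ‖T v‖ ^ 2 := by
    rw [← pythagoras _ (horth v hv), map_sub, map_smul, hfix, add_sub_cancel]
  rw [hTφ, hφ, add_sub_cancel_left]
  gcongr
  exact hshrink v hv

end Agsp

theorem exists_orthonormal_sum_eq {E F G : Type*} [NormedAddCommGroup E] [InnerProductSpace 𝕜 E]
    [AddCommGroup F] [Module 𝕜 F] [AddCommGroup G] [Module 𝕜 G] (B : E →ₗ[𝕜] F →ₗ[𝕜] G)
    {τ : Type*} [Fintype τ] (u : τ → E) (w : τ → F) :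
    ∃ (d : ℕ) (e : Fin d → E) (w' : Fin d → F), d ≤ Fintype.card τ ∧ Orthonormal 𝕜 e ∧
      ∑ i, B (u i) (w i) = ∑ j, B (e j) (w' j) := by
  set V := Submodule.span 𝕜 (Set.range u)
  have : FiniteDimensional 𝕜 V := FiniteDimensional.span_of_finite 𝕜 (Set.finite_range u)
  let b := stdOrthonormalBasis 𝕜 V
  have hu : ∀ i, u i = ∑ j, ⟪(b j : E), u i⟫_𝕜 • (b j : E) := fun i => by
    simpa using (congrArg V.subtype (b.sum_repr' ⟨u i, Submodule.subset_span ⟨i, rfl⟩⟩)).symm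
  refine ⟨_, fun j => b j, fun j => ∑ i, ⟪(b j : E), u i⟫_𝕜 • w i, finrank_range_le_card u,
    b.orthonormal.comp_linearIsometry V.subtypeₗᵢ, ?_⟩
  calc ∑ i, B (u i) (w i) = ∑ i, ∑ j, ⟪(b j : E), u i⟫_𝕜 • B (b j) (w i) :=
        Finset.sum_congr rfl fun i _ => by
          conv_lhs => rw [hu i]
          simp only [map_sum, map_smul, LinearMap.sum_apply, LinearMap.smul_apply]
    _ = _ := by
      rw [Finset.sum_comm]
      simp only [map_sum, map_smul]

section TensorVec

variable {ι κ : Type*}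

def tensorVec : EuclideanSpace 𝕜 ι →ₗ[𝕜] EuclideanSpace 𝕜 κ →ₗ[𝕜] EuclideanSpace 𝕜 (ι × κ) :=
  LinearMap.mk₂ 𝕜 (fun a b => toLp 2 fun p => a p.1 * b p.2)
    (fun _ _ _ => by ext; simp [add_mul]) (fun _ _ _ => by ext; simp [mul_assoc])
    (fun _ _ _ => by ext; simp [mul_add]) (fun _ _ _ => by ext; simp [mul_left_comm])

@[simp]
lemma tensorVec_apply (a : EuclideanSpace 𝕜 ι) (b : EuclideanSpace 𝕜 κ) (p : ι × κ) :
    tensorVec a b p = a p.1 * b p.2 := rfl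

lemma tensorVec_single_single [DecidableEq ι] [DecidableEq κ] (i : ι) (k : κ) (x y : 𝕜) :
    tensorVec (EuclideanSpace.single i x) (EuclideanSpace.single k y) =
      EuclideanSpace.single (i, k) (x * y) := by
  ext ⟨i', k'⟩
  by_cases hi : i' = i <;> by_cases hk : k' = k <;> simp [hi, hk]

lemma continuous_tensorVec :
    Continuous fun z : EuclideanSpace 𝕜 ι × EuclideanSpace 𝕜 κ => tensorVec z.1 z.2 :=
  (PiLp.continuous_toLp 2 _).comp <| continuous_pi fun p =>
    ((EuclideanSpace.proj p.1).continuous.comp continuous_fst).mul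
      ((EuclideanSpace.proj p.2).continuous.comp continuous_snd)

variable [Fintype ι] [Fintype κ]

lemma inner_tensorVec (a a' : EuclideanSpace 𝕜 ι) (b b' : EuclideanSpace 𝕜 κ) :
    ⟪tensorVec a b, tensorVec a' b'⟫_𝕜 = ⟪a, a'⟫_𝕜 * ⟪b, b'⟫_𝕜 := by
  simp only [PiLp.inner_apply, tensorVec_apply, RCLike.inner_apply, map_mul, Finset.sum_mul_sum,
    Fintype.sum_prod_type]
  exact Finset.sum_congr rfl fun _ _ => Finset.sum_congr rfl fun _ _ => by ring

lemma norm_tensorVec (a : EuclideanSpace 𝕜 ι) (b : EuclideanSpace 𝕜 κ) :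
    ‖tensorVec a b‖ = ‖a‖ * ‖b‖ := by
  have h := congrArg (fun z : 𝕜 => ‖z‖) (inner_tensorVec a a b b)
  simp only [norm_mul, inner_self_eq_norm_sq_to_K, norm_pow, RCLike.norm_ofReal, abs_norm] at h
  rw [← mul_pow] at h
  exact (pow_left_inj₀ (norm_nonneg _) (by positivity) two_ne_zero).mp h

def tensorVecIsometry (a : EuclideanSpace 𝕜 ι) (ha : ‖a‖ = 1) :
    EuclideanSpace 𝕜 κ →ₗᵢ[𝕜] EuclideanSpace 𝕜 (ι × κ) :=
  ⟨tensorVec a, fun b => by rw [norm_tensorVec, ha, one_mul]⟩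

lemma norm_sq_sum_tensorVec_of_orthonormal {σ : Type*} [Fintype σ] {e : σ → EuclideanSpace 𝕜 ι}
    (he : Orthonormal 𝕜 e) (w : σ → EuclideanSpace 𝕜 κ) :
    ‖∑ j, tensorVec (e j) (w j)‖ ^ 2 = ∑ j, ‖w j‖ ^ 2 := by
  have hV : OrthogonalFamily 𝕜 (fun _ => EuclideanSpace 𝕜 κ)
      fun j => tensorVecIsometry (e j) (he.1 j) := fun i j hij x y => by
    simp [tensorVecIsometry, inner_tensorVec, he.2 hij]
  exact hV.norm_sum w Finset.univ

lemma norm_inner_tensorVec_le_of_norm_eq_one {Γ : EuclideanSpace 𝕜 (ι × κ)} {μ : ℝ}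
    (hμ : ∀ a b, ‖a‖ = 1 → ‖b‖ = 1 → ‖⟪Γ, tensorVec a b⟫_𝕜‖ ≤ μ)
    (a : EuclideanSpace 𝕜 ι) (b : EuclideanSpace 𝕜 κ) :
    ‖⟪Γ, tensorVec a b⟫_𝕜‖ ≤ μ * (‖a‖ * ‖b‖) := by
  rcases eq_or_ne a 0 with rfl | ha
  · simp
  rcases eq_or_ne b 0 with rfl | hb
  · simp
  have hunit : ((‖a‖ * ‖b‖ : ℝ) : 𝕜) * ((‖a‖⁻¹ : 𝕜) * (‖b‖⁻¹ : 𝕜)) = 1 := by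
    have : (‖a‖ : 𝕜) ≠ 0 := by simpa using ha
    have : (‖b‖ : 𝕜) ≠ 0 := by simpa using hb
    push_cast
    field_simp
  have hab : tensorVec a b = ((‖a‖ * ‖b‖ : ℝ) : 𝕜) •
      tensorVec ((‖a‖⁻¹ : 𝕜) • a) ((‖b‖⁻¹ : 𝕜) • b) := by
    simp only [map_smul, LinearMap.smul_apply, smul_smul, mul_comm (‖b‖⁻¹ : 𝕜), hunit, one_smul]
  rw [hab, inner_smul_right, norm_mul, RCLike.norm_ofReal, abs_of_nonneg (by positivity),
    mul_comm]
  gcongr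
  exact hμ _ _ (norm_smul_inv_norm ha) (norm_smul_inv_norm hb)

theorem exists_maximizing_tensorVec [Nonempty ι] [Nonempty κ]
    (Γ : EuclideanSpace 𝕜 (ι × κ)) :
    ∃ a b, ‖a‖ = 1 ∧ ‖b‖ = 1 ∧
      ∀ a' b', ‖⟪Γ, tensorVec a' b'⟫_𝕜‖ ≤ ‖⟪Γ, tensorVec a b⟫_𝕜‖ * (‖a'‖ * ‖b'‖) := by
  have hS : (Metric.sphere (0 : EuclideanSpace 𝕜 ι) 1 ×ˢ
      Metric.sphere (0 : EuclideanSpace 𝕜 κ) 1).Nonempty :=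
    (NormedSpace.sphere_nonempty.mpr zero_le_one).prod (NormedSpace.sphere_nonempty.mpr zero_le_one)
  obtain ⟨⟨a, b⟩, ⟨ha, hb⟩, hmax⟩ :=
    ((isCompact_sphere _ _).prod (isCompact_sphere _ _)).exists_isMaxOn hS
      ((innerSL 𝕜 Γ).continuous.comp continuous_tensorVec).norm.continuousOn
  rw [mem_sphere_zero_iff_norm] at ha hb
  refine ⟨a, b, ha, hb, norm_inner_tensorVec_le_of_norm_eq_one fun a' b' ha' hb' => ?_⟩
  exact hmax (Set.mk_mem_prod (mem_sphere_zero_iff_norm.mpr ha') (mem_sphere_zero_iff_norm.mpr hb'))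

theorem exists_maximizing_tensorVec_of_ne_zero {Γ : EuclideanSpace 𝕜 (ι × κ)} (hΓ : Γ ≠ 0) :
    ∃ a b, ‖a‖ = 1 ∧ ‖b‖ = 1 ∧ 0 < ‖⟪Γ, tensorVec a b⟫_𝕜‖ ∧
      ∀ a' b', ‖⟪Γ, tensorVec a' b'⟫_𝕜‖ ≤ ‖⟪Γ, tensorVec a b⟫_𝕜‖ * (‖a'‖ * ‖b'‖) := by
  classical
  obtain ⟨⟨i, k⟩, hp⟩ : ∃ p, Γ p ≠ 0 := by
    by_contra! h
    exact hΓ (PiLp.ext h)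
  have : Nonempty ι := ⟨i⟩
  have : Nonempty κ := ⟨k⟩
  obtain ⟨a, b, ha, hb, hmax⟩ := exists_maximizing_tensorVec Γ
  refine ⟨a, b, ha, hb, ?_, hmax⟩
  have h := hmax (EuclideanSpace.single i 1) (EuclideanSpace.single k 1)
  rw [tensorVec_single_single, EuclideanSpace.inner_single_right] at h
  simp only [one_mul, RCLike.norm_conj, PiLp.norm_single, norm_one, mul_one] at h
  exact (norm_pos_iff.mpr hp).trans_le h

theorem norm_inner_sum_tensorVec_sq_le {τ : Type*} [Fintype τ] {Γ : EuclideanSpace 𝕜 (ι × κ)}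
    {μ : ℝ} (hμ : ∀ a b, ‖⟪Γ, tensorVec a b⟫_𝕜‖ ≤ μ * (‖a‖ * ‖b‖))
    (u : τ → EuclideanSpace 𝕜 ι) (w : τ → EuclideanSpace 𝕜 κ) :
    ‖⟪Γ, ∑ i, tensorVec (u i) (w i)⟫_𝕜‖ ^ 2 ≤
      Fintype.card τ * μ ^ 2 * ‖∑ i, tensorVec (u i) (w i)‖ ^ 2 := by
  obtain ⟨d, e, w', hd, he, hsum⟩ := exists_orthonormal_sum_eq tensorVec u w
  have hterm : ‖⟪Γ, ∑ j, tensorVec (e j) (w' j)⟫_𝕜‖ ≤ μ * ∑ j, ‖w' j‖ := by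
    rw [inner_sum, Finset.mul_sum]
    refine (norm_sum_le _ _).trans (Finset.sum_le_sum fun j _ => ?_)
    simpa [he.1 j] using hμ (e j) (w' j)
  rw [hsum, norm_sq_sum_tensorVec_of_orthonormal he]
  calc ‖⟪Γ, ∑ j, tensorVec (e j) (w' j)⟫_𝕜‖ ^ 2 ≤ μ ^ 2 * (∑ j, ‖w' j‖) ^ 2 := by
        rw [← mul_pow]; gcongr
    _ ≤ μ ^ 2 * (d * ∑ j, ‖w' j‖ ^ 2) := by
        gcongr
        simpa using sq_sum_le_card_mul_sum_sq (s := Finset.univ) (f := fun j => ‖w' j‖)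
    _ ≤ Fintype.card τ * μ ^ 2 * ∑ j, ‖w' j‖ ^ 2 := by
        rw [mul_comm (Fintype.card τ : ℝ), mul_assoc]
        gcongr

lemma toEuclideanLin_tensorVec {τ : Type*} [Fintype τ] [DecidableEq ι] [DecidableEq κ]
    {K : Matrix (ι × κ) (ι × κ) 𝕜} {L : τ → Matrix ι ι 𝕜} {R : τ → Matrix κ κ 𝕜}
    (hK : ∀ p q, K p q = ∑ i, L i p.1 q.1 * R i p.2 q.2)
    (a : EuclideanSpace 𝕜 ι) (b : EuclideanSpace 𝕜 κ) :
    toEuclideanLin K (tensorVec a b) =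
      ∑ i, tensorVec (toEuclideanLin (L i) a) (toEuclideanLin (R i) b) := by
  ext p
  simp only [toLpLin_apply, WithLp.ofLp_sum, Finset.sum_apply, tensorVec_apply, mulVec,
    dotProduct, hK, Finset.sum_mul]
  rw [Finset.sum_comm]
  refine Fintype.sum_congr _ _ fun i => ?_
  rw [Fintype.sum_prod_type]
  refine Fintype.sum_congr _ _ fun _ => ?_
  rw [Finset.mul_sum]
  exact Fintype.sum_congr _ _ fun _ => by ring

end TensorVec

section DotProduct

variable {n : Type*} [Fintype n]

lemma star_dotProduct_eq_inner (x y : n → 𝕜) : star x ⬝ᵥ y = ⟪toLp 2 x, toLp 2 y⟫_𝕜 := by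
  rw [EuclideanSpace.inner_toLp_toLp, dotProduct_comm]

lemma re_star_dotProduct_self (x : n → ℂ) : (star x ⬝ᵥ x).re = ‖toLp 2 x‖ ^ 2 := by
  rw [star_dotProduct_eq_inner]
  exact inner_self_eq_norm_sq (𝕜 := ℂ) _

lemma norm_toLp_eq_one {x : n → ℂ} (hx : star x ⬝ᵥ x = 1) : ‖toLp 2 x‖ = 1 := by
  have h := congrArg Complex.re hx
  rwa [re_star_dotProduct_self, Complex.one_re, pow_eq_one_iff_of_nonneg (norm_nonneg _)
    two_ne_zero] at h

lemma toEuclideanLin_inner_eq_zero_and_norm_sq_le [DecidableEq n] {K : Matrix n n ℂ} {Γ : n → ℂ}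
    {Δ : ℝ} (hshrink : ∀ v : n → ℂ, star Γ ⬝ᵥ v = 0 →
      star Γ ⬝ᵥ K *ᵥ v = 0 ∧ (star (K *ᵥ v) ⬝ᵥ K *ᵥ v).re ≤ Δ * (star v ⬝ᵥ v).re)
    (v : EuclideanSpace ℂ n) (hv : ⟪toLp 2 Γ, v⟫_ℂ = 0) :
    ⟪toLp 2 Γ, toEuclideanLin K v⟫_ℂ = 0 ∧ ‖toEuclideanLin K v‖ ^ 2 ≤ Δ * ‖v‖ ^ 2 := by
  have h := hshrink (ofLp v) (by rwa [star_dotProduct_eq_inner, toLp_ofLp])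
  rwa [star_dotProduct_eq_inner, re_star_dotProduct_self, re_star_dotProduct_self] at h

end DotProduct

lemma one_div_sqrt_two_mul_le {D Δ μ t : ℝ} (hD : 0 ≤ D) (hμ : 0 < μ) (hμ1 : μ ≤ 1)
    (hDΔ : D * Δ ≤ 1 / 2) (hrank : μ ^ 2 ≤ D * μ ^ 2 * t) (ht : t ≤ μ ^ 2 + Δ * (1 - μ ^ 2)) :
    1 / √(2 * D) ≤ μ := by
  have h1 : 1 ≤ D * t := by nlinarith [pow_pos hμ 2]
  have h2 : 1 ≤ 2 * D * μ ^ 2 := by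
    nlinarith [mul_le_mul_of_nonneg_left ht hD, pow_le_one₀ (n := 2) hμ.le hμ1]
  have hD0 : 0 < 2 * D := by nlinarith [pow_pos hμ 2]
  rw [one_div, ← Real.sqrt_inv, Real.sqrt_le_iff]
  exact ⟨hμ.le, by rw [inv_le_iff_one_le_mul₀ hD0]; linarith⟩

end AreaLaw

end

open AreaLaw

theorem agsp_implies_product_overlap_general (m n : ℕ) (D : ℕ) (Δ : ℝ)
    (Γ : Fin m × Fin n → ℂ) (hΓ : star Γ ⬝ᵥ Γ = 1)
    (K : Matrix (Fin m × Fin n) (Fin m × Fin n) ℂ)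
    -- ground state invariance
    (hfix : K.mulVec Γ = Γ)
    -- shrinking: K preserves Γ-orthogonality and shrinks squared norms by Δ
    (hshrink : ∀ v : Fin m × Fin n → ℂ, star Γ ⬝ᵥ v = 0 →
      star Γ ⬝ᵥ K.mulVec v = 0 ∧
      (star (K.mulVec v) ⬝ᵥ K.mulVec v).re ≤ Δ * (star v ⬝ᵥ v).re)
    -- Schmidt rank of K across the cut is at most D
    (hrank : ∃ (Lm : Fin D → Matrix (Fin m) (Fin m) ℂ)
               (Rm : Fin D → Matrix (Fin n) (Fin n) ℂ),
        ∀ p q, K p q = ∑ i, Lm i p.1 q.1 * Rm i p.2 q.2)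
    (hDΔ : (D : ℝ) * Δ ≤ 1 / 2) :
    ∃ (φL : Fin m → ℂ) (φR : Fin n → ℂ),
      (star (fun p : Fin m × Fin n => φL p.1 * φR p.2) ⬝ᵥ
        (fun p : Fin m × Fin n => φL p.1 * φR p.2)) = 1 ∧
      1 / Real.sqrt (2 * D) ≤
        ‖star Γ ⬝ᵥ (fun p : Fin m × Fin n => φL p.1 * φR p.2)‖ := by
  obtain ⟨L, R, hK⟩ := hrank
  set Γ' : EuclideanSpace ℂ (Fin m × Fin n) := toLp 2 Γ
  have hΓ' : ‖Γ'‖ = 1 := norm_toLp_eq_one hΓ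
  have hKΓ : toEuclideanLin K Γ' = Γ' := congrArg (toLp 2) hfix
  have hK' := toEuclideanLin_inner_eq_zero_and_norm_sq_le hshrink
  have horth : ∀ v, ⟪Γ', v⟫_ℂ = 0 → ⟪Γ', toEuclideanLin K v⟫_ℂ = 0 := fun v hv => (hK' v hv).1
  obtain ⟨a, b, ha, hb, hμ, hmax⟩ :=
    exists_maximizing_tensorVec_of_ne_zero (norm_ne_zero_iff.mp (hΓ'.trans_ne one_ne_zero))
  have hφ : ‖tensorVec a b‖ = 1 := by rw [norm_tensorVec, ha, hb, one_mul]
  have hμ1 : ‖⟪Γ', tensorVec a b⟫_ℂ‖ ≤ 1 :=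
    (norm_inner_le_norm _ _).trans (by rw [hΓ', hφ, one_mul])
  have hKφ := norm_sq_apply_le_of_agsp hΓ' hKΓ horth (fun v hv => (hK' v hv).2)
    (tensorVec a b)
  have hrankφ := norm_inner_sum_tensorVec_sq_le hmax (fun i => toEuclideanLin (L i) a)
    (fun i => toEuclideanLin (R i) b)
  rw [← toEuclideanLin_tensorVec hK, inner_apply_eq_of_agsp hΓ' hKΓ horth,
    Fintype.card_fin] at hrankφ
  rw [hφ, one_pow] at hKφ
  refine ⟨ofLp a, ofLp b, ?_, ?_⟩
  · rw [star_dotProduct_eq_inner]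
    change ⟪tensorVec a b, tensorVec a b⟫_ℂ = 1
    rw [inner_self_eq_norm_sq_to_K, hφ]
    simp
  · rw [star_dotProduct_eq_inner]
    exact one_div_sqrt_two_mul_le (Nat.cast_nonneg D) hμ hμ1 hDΔ hrankφ hKφ

/-- Lemma 2 of the Arad–Kitaev–Landau–Vazirani 1D area law proof: a `(D,Δ)`-AGSP with
`D·Δ ≤ 1/2` implies the existence of a product state with overlap at least `1/√(2D)`
with the (unique) ground state `Γ`. -/
theorem agsp_implies_product_overlap (m n : ℕ) (D : ℕ) (Δ : ℝ) (hΔ : 0 ≤ Δ)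
    (Γ : Fin m × Fin n → ℂ) (hΓ : star Γ ⬝ᵥ Γ = 1)
    (K : Matrix (Fin m × Fin n) (Fin m × Fin n) ℂ)
    -- ground state invariance
    (hfix : K.mulVec Γ = Γ)
    -- shrinking: K preserves Γ-orthogonality and shrinks squared norms by Δ
    (hshrink : ∀ v : Fin m × Fin n → ℂ, star Γ ⬝ᵥ v = 0 →
      star Γ ⬝ᵥ K.mulVec v = 0 ∧
      (star (K.mulVec v) ⬝ᵥ K.mulVec v).re ≤ Δ * (star v ⬝ᵥ v).re)
    -- Schmidt rank of K across the cut is at most D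
    (hrank : ∃ (Lm : Fin D → Matrix (Fin m) (Fin m) ℂ)
               (Rm : Fin D → Matrix (Fin n) (Fin n) ℂ),
        ∀ p q, K p q = ∑ i, Lm i p.1 q.1 * Rm i p.2 q.2)
    (hDΔ : (D : ℝ) * Δ ≤ 1 / 2) :
    ∃ (φL : Fin m → ℂ) (φR : Fin n → ℂ),
      (star (fun p : Fin m × Fin n => φL p.1 * φR p.2) ⬝ᵥ
        (fun p : Fin m × Fin n => φL p.1 * φR p.2)) = 1 ∧
      1 / Real.sqrt (2 * D) ≤
        ‖star Γ ⬝ᵥ (fun p : Fin m × Fin n => φL p.1 * φR p.2)‖ :=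
  agsp_implies_product_overlap_general m n D Δ Γ hΓ K hfix hshrink hrank hDΔ
end

section
/- Let Γ be a unit vector in a bipartite Hilbert space with Schmidt coefficients λ₁ ≥ λ₂ ≥ … ≥ 0, and let φ be any unit vector of Schmidt rank at most r. Then |⟨Γ|φ⟩|² ≤ Σ_{i=1}^r λᵢ². -/
/-!
Write `φ = ∑ₖ Aₖ ⊗ wₖ` with `{wₖ}` orthonormal and `k < d ≤ r`, so that `∑ₖ ‖Aₖ‖² = ‖φ‖² = 1`.
Then `⟨Γ|φ⟩ = ∑_{i,k} λᵢ ⟨Lᵢ|Aₖ⟩ ⟨Rᵢ|wₖ⟩`, and Cauchy–Schwarz over the pairs `(i, k)` together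
with Bessel's inequality for `{Lᵢ}` gives `|⟨Γ|φ⟩|² ≤ ∑ᵢ λᵢ² tᵢ` with `tᵢ = ∑ₖ |⟨Rᵢ|wₖ⟩|²`.
Bessel's inequality again gives `tᵢ ≤ 1` and `∑ᵢ tᵢ ≤ d ≤ r`, and since the `λᵢ²` decrease,
such weights contribute most when placed on the first `r` indices.
-/

open Matrix Finset

variable {𝕜 ι κ α β : Type*}

def sumTensor [CommSemiring 𝕜] [Fintype ι] (u : ι → α → 𝕜) (v : ι → β → 𝕜) : α × β → 𝕜 :=
  fun p => ∑ i, u i p.1 * v i p.2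

theorem star_sumTensor_dotProduct_sumTensor [CommSemiring 𝕜] [StarRing 𝕜] [Fintype ι]
    [Fintype κ] [Fintype α] [Fintype β] (u : ι → α → 𝕜) (v : ι → β → 𝕜)
    (u' : κ → α → 𝕜) (v' : κ → β → 𝕜) :
    star (sumTensor u v) ⬝ᵥ sumTensor u' v' =
      ∑ i, ∑ j, (star (u i) ⬝ᵥ u' j) * (star (v i) ⬝ᵥ v' j) := by
  simp only [sumTensor, dotProduct, Pi.star_apply, star_sum, star_mul', sum_mul_sum,
    Fintype.sum_prod_type]
  simp_rw [sum_comm (s := (univ : Finset α)), sum_comm (s := (univ : Finset β))]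
  exact sum_congr rfl fun i _ => sum_congr rfl fun j _ => sum_congr rfl fun x _ =>
    sum_congr rfl fun y _ => by ring

theorem star_sumTensor_dotProduct_self [CommSemiring 𝕜] [StarRing 𝕜] [Fintype κ] [DecidableEq κ]
    [Fintype α] [Fintype β] (A : κ → α → 𝕜) {w : κ → β → 𝕜}
    (hw : ∀ k l, star (w k) ⬝ᵥ w l = if k = l then 1 else 0) :
    star (sumTensor A w) ⬝ᵥ sumTensor A w = ∑ k, star (A k) ⬝ᵥ A k := by
  simp only [star_sumTensor_dotProduct_sumTensor, hw, mul_ite, mul_one, mul_zero, sum_ite_eq,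
    mem_univ, if_true]

theorem sumTensor_sum_smul_right [CommSemiring 𝕜] [Fintype ι] [Fintype κ] (a : ι → α → 𝕜)
    (c : ι → κ → 𝕜) (w : κ → β → 𝕜) :
    sumTensor a (fun j => ∑ k, c j k • w k) = sumTensor (fun k => ∑ j, c j k • a j) w := by
  funext p
  simp only [sumTensor, Finset.sum_apply, Pi.smul_apply, smul_eq_mul, mul_sum, sum_mul]
  rw [sum_comm]
  exact sum_congr rfl fun k _ => sum_congr rfl fun j _ => by ring

theorem orthonormal_toLp_iff [RCLike 𝕜] [DecidableEq ι] [Fintype β] {v : ι → β → 𝕜} :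
    Orthonormal 𝕜 (fun i => WithLp.toLp 2 (v i) : ι → EuclideanSpace 𝕜 β) ↔
      ∀ i j, star (v i) ⬝ᵥ v j = if i = j then 1 else 0 := by
  simp only [orthonormal_iff_ite, EuclideanSpace.inner_toLp_toLp, dotProduct_comm _ (star _)]

theorem sum_norm_star_dotProduct_sq_le [RCLike 𝕜] [Fintype ι] [DecidableEq ι] [Fintype β]
    {v : ι → β → 𝕜}
    (hv : ∀ i j, star (v i) ⬝ᵥ v j = if i = j then 1 else 0) (x : β → 𝕜) :
    ∑ i, ‖star (v i) ⬝ᵥ x‖ ^ 2 ≤ RCLike.re (star x ⬝ᵥ x) := by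
  have hB := (orthonormal_toLp_iff.mpr hv).sum_inner_products_le (WithLp.toLp 2 x)
    (s := univ)
  rw [@norm_sq_eq_re_inner 𝕜, EuclideanSpace.inner_toLp_toLp, dotProduct_comm] at hB
  simpa only [EuclideanSpace.inner_toLp_toLp, dotProduct_comm x] using hB

theorem sum_norm_star_dotProduct_sq_le_one [RCLike 𝕜] [Fintype κ] [DecidableEq κ] [Fintype β]
    {w : κ → β → 𝕜}
    (hw : ∀ k l, star (w k) ⬝ᵥ w l = if k = l then 1 else 0) {x : β → 𝕜}
    (hx : star x ⬝ᵥ x = 1) :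
    ∑ k, ‖star x ⬝ᵥ w k‖ ^ 2 ≤ 1 := by
  have hB := sum_norm_star_dotProduct_sq_le hw x
  rw [hx, RCLike.one_re] at hB
  refine le_of_eq_of_le (sum_congr rfl fun k _ => ?_) hB
  rw [star_dotProduct, norm_star]

theorem sum_sum_norm_star_dotProduct_sq_le_card [RCLike 𝕜] [Fintype ι] [DecidableEq ι]
    [Fintype κ] [DecidableEq κ] [Fintype β]
    {v : ι → β → 𝕜} {w : κ → β → 𝕜}
    (hv : ∀ i j, star (v i) ⬝ᵥ v j = if i = j then 1 else 0)
    (hw : ∀ k l, star (w k) ⬝ᵥ w l = if k = l then 1 else 0) :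
    ∑ i, ∑ k, ‖star (v i) ⬝ᵥ w k‖ ^ 2 ≤ Fintype.card κ := by
  rw [sum_comm]
  calc ∑ k, ∑ i, ‖star (v i) ⬝ᵥ w k‖ ^ 2 ≤ ∑ _k : κ, (1 : ℝ) :=
        sum_le_sum fun k _ => by simpa [hw k k] using sum_norm_star_dotProduct_sq_le hv (w k)
    _ = Fintype.card κ := by simp

theorem exists_orthonormal_sum_smul_eq [RCLike 𝕜] [Fintype ι] [Fintype β] (b : ι → β → 𝕜) :
    ∃ d ≤ Fintype.card ι, ∃ (w : Fin d → β → 𝕜) (c : ι → Fin d → 𝕜),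
      (∀ k l, star (w k) ⬝ᵥ w l = if k = l then 1 else 0) ∧ ∀ j, b j = ∑ k, c j k • w k := by
  set W := Submodule.span 𝕜 (Set.range fun j => (WithLp.toLp 2 (b j) : EuclideanSpace 𝕜 β))
  have hb : ∀ j, WithLp.toLp 2 (b j) ∈ W := fun j => Submodule.subset_span ⟨j, rfl⟩
  let o := stdOrthonormalBasis 𝕜 W
  refine ⟨Module.finrank 𝕜 W, finrank_range_le_card _,
    fun k => WithLp.ofLp (o k : EuclideanSpace 𝕜 β), fun j => o.repr ⟨_, hb j⟩,
    fun k l => ?_, fun j => ?_⟩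
  · exact orthonormal_toLp_iff.mp (o.orthonormal.comp_linearIsometry W.subtypeₗᵢ) k l
  · have h := congrArg (fun x : W => WithLp.ofLp (x : EuclideanSpace 𝕜 β)) (o.sum_repr ⟨_, hb j⟩)
    simpa using h.symm

theorem exists_orthonormal_sumTensor_eq [RCLike 𝕜] [Fintype ι] [Fintype β] (a : ι → α → 𝕜)
    (b : ι → β → 𝕜) :
    ∃ d ≤ Fintype.card ι, ∃ (A : Fin d → α → 𝕜) (w : Fin d → β → 𝕜),
      (∀ k l, star (w k) ⬝ᵥ w l = if k = l then 1 else 0) ∧ sumTensor a b = sumTensor A w := by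
  obtain ⟨d, hd, w, c, hw, hb⟩ := exists_orthonormal_sum_smul_eq b
  exact ⟨d, hd, _, w, hw,
    (congrArg (sumTensor a) (funext hb)).trans (sumTensor_sum_smul_right a c w)⟩

theorem norm_sum_mul_sq_le {R : Type*} [SeminormedRing R] [Fintype κ] (z w : κ → R) :
    ‖∑ k, z k * w k‖ ^ 2 ≤ (∑ k, ‖z k‖ ^ 2) * ∑ k, ‖w k‖ ^ 2 :=
  calc ‖∑ k, z k * w k‖ ^ 2 ≤ (∑ k, ‖z k‖ * ‖w k‖) ^ 2 := by
        gcongr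
        exact (norm_sum_le _ _).trans (sum_le_sum fun k _ => norm_mul_le _ _)
    _ ≤ _ := sum_mul_sq_le_sq_mul_sq _ _ _

theorem norm_star_sumTensor_dotProduct_sq_le [RCLike 𝕜] [Fintype ι] [DecidableEq ι] [Fintype κ]
    [Fintype α] [Fintype β] (lam : ι → ℝ)
    {L : ι → α → 𝕜} (hL : ∀ i j, star (L i) ⬝ᵥ L j = if i = j then 1 else 0)
    (R : ι → β → 𝕜) (A : κ → α → 𝕜) (w : κ → β → 𝕜)
    (hA : ∑ k, RCLike.re (star (A k) ⬝ᵥ A k) ≤ 1) :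
    ‖star (sumTensor (fun i => (lam i : 𝕜) • L i) R) ⬝ᵥ sumTensor A w‖ ^ 2 ≤
      ∑ i, lam i ^ 2 * ∑ k, ‖star (R i) ⬝ᵥ w k‖ ^ 2 := by
  have hexp : star (sumTensor (fun i => (lam i : 𝕜) • L i) R) ⬝ᵥ sumTensor A w =
      ∑ q : ι × κ, (star (L q.1) ⬝ᵥ A q.2) * ((lam q.1 : 𝕜) * (star (R q.1) ⬝ᵥ w q.2)) := by
    rw [star_sumTensor_dotProduct_sumTensor, Fintype.sum_prod_type]
    simp only [star_smul, RCLike.star_def, RCLike.conj_ofReal, smul_dotProduct, smul_eq_mul]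
    exact sum_congr rfl fun i _ => sum_congr rfl fun k _ => by ring
  have hLA : ∑ q : ι × κ, ‖star (L q.1) ⬝ᵥ A q.2‖ ^ 2 ≤ 1 := by
    rw [Fintype.sum_prod_type, sum_comm]
    exact (sum_le_sum fun k _ => sum_norm_star_dotProduct_sq_le hL (A k)).trans hA
  have hRw : ∑ q : ι × κ, ‖(lam q.1 : 𝕜) * (star (R q.1) ⬝ᵥ w q.2)‖ ^ 2 =
      ∑ i, lam i ^ 2 * ∑ k, ‖star (R i) ⬝ᵥ w k‖ ^ 2 := by
    simp only [Fintype.sum_prod_type, norm_mul, mul_pow, RCLike.norm_ofReal, sq_abs, mul_sum]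
  rw [hexp, ← hRw]
  exact (norm_sum_mul_sq_le _ _).trans
    (mul_le_of_le_one_left (sum_nonneg fun _ _ => by positivity) hLA)

theorem sum_mul_le_sum_filter_lt {N r : ℕ} {μ t : Fin N → ℝ} (hμ : Antitone μ)
    (hμ0 : ∀ i, 0 ≤ μ i) (ht0 : ∀ i, 0 ≤ t i) (ht1 : ∀ i, t i ≤ 1) (ht : ∑ i, t i ≤ r) :
    ∑ i, μ i * t i ≤ ∑ i ∈ univ.filter (fun i : Fin N => (i : ℕ) < r), μ i := by
  rcases le_or_gt N r with hNr | hrN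
  · rw [filter_true_of_mem fun i _ => i.isLt.trans_le hNr]
    exact sum_le_sum fun i _ => mul_le_of_le_one_right (hμ0 i) (ht1 i)
  set c := μ ⟨r, hrN⟩
  -- `μ i - c` and `t i - [i < r]` have opposite signs.
  have key : ∀ i : Fin N, μ i * t i ≤
      (if (i : ℕ) < r then μ i else 0) + c * (t i - if (i : ℕ) < r then 1 else 0) := by
    intro i
    split_ifs with hi
    · nlinarith [hμ (show i ≤ ⟨r, hrN⟩ from Fin.le_def.mpr hi.le), ht1 i]
    · nlinarith [hμ (show (⟨r, hrN⟩ : Fin N) ≤ i from Fin.le_def.mpr (not_lt.mp hi)), ht0 i]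
  calc ∑ i, μ i * t i
      ≤ ∑ i : Fin N, ((if (i : ℕ) < r then μ i else 0) +
          c * (t i - if (i : ℕ) < r then 1 else 0)) := sum_le_sum fun i _ => key i
    _ = ∑ i ∈ univ.filter (fun i : Fin N => (i : ℕ) < r), μ i + c * (∑ i, t i - r) := by
        rw [sum_add_distrib, ← mul_sum, sum_sub_distrib, sum_boole, ← sum_filter,
          Fin.card_filter_val_lt, min_eq_right hrN.le]
    _ ≤ _ := add_le_of_nonpos_right (mul_nonpos_of_nonneg_of_nonpos (hμ0 _) (by linarith))

theorem eckart_young_overlap_general (m n N r : ℕ)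
    (lam : Fin N → ℝ) (hnonneg : ∀ i, 0 ≤ lam i)
    (hmono : ∀ i j : Fin N, i ≤ j → lam j ≤ lam i)
    (L : Fin N → Fin m → ℂ) (R : Fin N → Fin n → ℂ)
    (hLorth : ∀ i j, star (L i) ⬝ᵥ L j = if i = j then 1 else 0)
    (hRorth : ∀ i j, star (R i) ⬝ᵥ R j = if i = j then 1 else 0)
    (Γ : Fin m × Fin n → ℂ)
    (hΓ : Γ = fun p => ∑ i, (lam i : ℂ) * L i p.1 * R i p.2)
    (φ : Fin m × Fin n → ℂ) (hφunit : star φ ⬝ᵥ φ = 1)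
    (a : Fin r → Fin m → ℂ) (b : Fin r → Fin n → ℂ)
    (hφ : φ = fun p => ∑ i, a i p.1 * b i p.2) :
    ‖star Γ ⬝ᵥ φ‖ ^ 2 ≤ ∑ i ∈ Finset.univ.filter (fun i : Fin N => (i : ℕ) < r), lam i ^ 2 := by
  obtain ⟨d, hd, A, w, hw, hab⟩ := exists_orthonormal_sumTensor_eq a b
  have hφ' : φ = sumTensor A w := hφ.trans hab
  have hΓ' : Γ = sumTensor (fun i => (lam i : ℂ) • L i) R := hΓ
  have hA : ∑ k, RCLike.re (star (A k) ⬝ᵥ A k) ≤ 1 := by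
    rw [← map_sum, ← star_sumTensor_dotProduct_self A hw, ← hφ', hφunit, RCLike.one_re]
  rw [hΓ', hφ']
  refine (norm_star_sumTensor_dotProduct_sq_le lam hLorth R A w hA).trans ?_
  refine sum_mul_le_sum_filter_lt (fun i j hij => pow_le_pow_left₀ (hnonneg j) (hmono i j hij) 2)
    (fun _ => sq_nonneg _) (fun _ => sum_nonneg fun _ _ => sq_nonneg _)
    (fun _ => sum_norm_star_dotProduct_sq_le_one hw (by rw [hRorth, if_pos rfl])) ?_
  exact (sum_sum_norm_star_dotProduct_sq_le_card hRorth hw).trans (by simpa using hd)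

/-- Eckart–Young-type overlap bound: the squared overlap of a unit vector `Γ` with
Schmidt coefficients `λ₁ ≥ λ₂ ≥ …` against any unit vector `φ` of Schmidt rank at most
`r` is bounded by the sum of the first `r` squared Schmidt coefficients of `Γ`. -/
theorem eckart_young_overlap (m n N r : ℕ)
    (lam : Fin N → ℝ) (hnonneg : ∀ i, 0 ≤ lam i)
    (hmono : ∀ i j : Fin N, i ≤ j → lam j ≤ lam i)
    (L : Fin N → Fin m → ℂ) (R : Fin N → Fin n → ℂ)
    (hLorth : ∀ i j, star (L i) ⬝ᵥ L j = if i = j then 1 else 0)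
    (hRorth : ∀ i j, star (R i) ⬝ᵥ R j = if i = j then 1 else 0)
    (Γ : Fin m × Fin n → ℂ)
    (hΓ : Γ = fun p => ∑ i, (lam i : ℂ) * L i p.1 * R i p.2)
    (hΓunit : star Γ ⬝ᵥ Γ = 1)
    (φ : Fin m × Fin n → ℂ) (hφunit : star φ ⬝ᵥ φ = 1)
    (a : Fin r → Fin m → ℂ) (b : Fin r → Fin n → ℂ)
    (hφ : φ = fun p => ∑ i, a i p.1 * b i p.2) :
    ‖star Γ ⬝ᵥ φ‖ ^ 2 ≤ ∑ i ∈ Finset.univ.filter (fun i : Fin N => (i : ℕ) < r), lam i ^ 2 :=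
  eckart_young_overlap_general m n N r lam hnonneg hmono L R hLorth hRorth Γ hΓ φ hφunit a b hφ
end

section
/- Let T_ℓ denote the degree-ℓ Chebyshev polynomial of the first kind. Then for every real x > 1, T_ℓ(x) ≥ (1/2)·exp(2ℓ·√((x−1)/(x+1))). -/
open Polynomial

/-! Writing `x = cosh t`, the identity `T_ℓ (cosh t) = cosh (ℓ t) ≥ exp (ℓ t) / 2` reduces the bound to
`t ≥ 2 √((x - 1) / (x + 1))`. By the half-angle formula `√((x - 1) / (x + 1)) = tanh (t / 2)`, i.e.
`t = 2 artanh √((x - 1) / (x + 1))`, so it remains to see `s ≤ artanh s` on `[0, 1)`, which is read off the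
first term of the power series `artanh s = ∑ s ^ (2k+1) / (2k+1)`. -/

namespace Real

theorem self_le_artanh {s : ℝ} (hs₀ : 0 ≤ s) (hs₁ : s < 1) : s ≤ artanh s := by
  have hsum := hasSum_log_sub_log_of_abs_lt_one (abs_lt.2 ⟨by linarith, hs₁⟩)
  have hfirst := le_hasSum hsum 0 fun k _ ↦ by positivity
  rw [artanh_eq_half_log ⟨by linarith, hs₁.le⟩, log_div (by linarith) (by linarith)]
  simp only [CharP.cast_eq_zero, mul_zero, zero_add, pow_one] at hfirst
  linarith

theorem cosh_two_mul_artanh {s : ℝ} (hs : s ∈ Set.Ioo (-1) 1) :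
    cosh (2 * artanh s) = (1 + s ^ 2) / (1 - s ^ 2) := by
  have h : 0 < 1 - s ^ 2 := by nlinarith [hs.1, hs.2]
  rw [cosh_two_mul, cosh_artanh hs, sinh_artanh hs, div_pow, div_pow, sq_sqrt h.le]
  field_simp

theorem sqrt_sub_one_div_add_one_mem_Ico {x : ℝ} (hx : 1 ≤ x) :
    √((x - 1) / (x + 1)) ∈ Set.Ico 0 1 :=
  ⟨sqrt_nonneg _, (sqrt_lt' one_pos).2 <| by rw [one_pow, div_lt_one (by linarith)]; linarith⟩

theorem cosh_two_mul_artanh_sqrt_sub_one_div_add_one {x : ℝ} (hx : 1 ≤ x) :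
    cosh (2 * artanh √((x - 1) / (x + 1))) = x := by
  have ⟨h₀, h₁⟩ := sqrt_sub_one_div_add_one_mem_Ico hx
  rw [cosh_two_mul_artanh ⟨by linarith, h₁⟩, sq_sqrt (div_nonneg (by linarith) (by linarith))]
  field_simp
  ring

theorem half_exp_le_cosh (x : ℝ) : exp x / 2 ≤ cosh x := by
  rw [cosh_eq]
  have := exp_pos (-x)
  linarith

end Real

open Real

theorem Polynomial.Chebyshev.half_exp_le_eval_T_cosh (n : ℤ) (t : ℝ) :
    exp (n * t) / 2 ≤ (T ℝ n).eval (cosh t) :=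
  T_real_cosh t n ▸ half_exp_le_cosh _

/-- Growth bound for Chebyshev polynomials of the first kind:
`T_ℓ(x) ≥ (1/2)·exp(2ℓ√((x-1)/(x+1)))` for `x > 1`. -/
theorem chebyshev_growth (ℓ : ℕ) (x : ℝ) (hx : 1 < x) :
    (1 / 2 : ℝ) * Real.exp (2 * ℓ * Real.sqrt ((x - 1) / (x + 1)))
      ≤ (Polynomial.Chebyshev.T ℝ ℓ).eval x := by
  obtain ⟨hs₀, hs₁⟩ := sqrt_sub_one_div_add_one_mem_Ico hx.le
  set s := √((x - 1) / (x + 1))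
  calc (1 / 2 : ℝ) * exp (2 * ℓ * s)
      ≤ exp (((ℓ : ℤ) : ℝ) * (2 * artanh s)) / 2 := by
        have := mul_le_mul_of_nonneg_left (self_le_artanh hs₀ hs₁) (by positivity : (0 : ℝ) ≤ 2 * ℓ)
        rw [one_div_mul_eq_div, Int.cast_natCast]
        gcongr 2
        linarith
    _ ≤ (Chebyshev.T ℝ ℓ).eval (cosh (2 * artanh s)) := Chebyshev.half_exp_le_eval_T_cosh ℓ _
    _ = (Chebyshev.T ℝ ℓ).eval x := by rw [cosh_two_mul_artanh_sqrt_sub_one_div_add_one hx.le]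
end
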